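/- (Eigendecomposition of the one-layer convolutional kernel.) Let $q \le d/2$, let $h: \mathbb{R} \to \mathbb{R}$ have hypercube Gegenbauer coefficients $\xi_{q,\ell}$ on $\{-1,1\}^q$, and define $H^{CK}(x, y) = \frac{1}{d} \sum_{k=1}^{d} h(\langle x_{(k)}, y_{(k)} \rangle / q)$ where $x_{(k)} = (x_k, \ldots, x_{k+q-1})$ with cyclic indexing. Then $H^{CK}(x, y) = \xi_{q,0} + \sum_{\ell=1}^{q} \sum_{S \in \mathcal{E}_\ell} \frac{r(S) \xi_{q,\ell}}{d} Y_S(x) Y_S(y)$, where $\mathcal{E}_\ell = \{S \subseteq \mathbb{Z}/d\mathbb{Z} : |S| = \ell, \gamma(S) \le q\}$ and $r(S) = q + 1 - \gamma(S)$. -/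
import Mathlib

set_option linter.unusedSectionVars false

/-- The ±1 value of a boolean coordinate. -/
def pm (b : Bool) : ℝ := if b then 1 else -1

/-- Fourier character `Y_S(x) = ∏_{i ∈ S} x_i` on the hypercube. -/
def Y {n : Type*} [DecidableEq n] (S : Finset n) (x : n → Bool) : ℝ :=
  ∏ i ∈ S, pm (x i)

/-- Inner product `⟨x, y⟩ = ∑ i, x_i y_i` on the hypercube. -/
def ip {n : Type*} [Fintype n] (x y : n → Bool) : ℝ :=
  ∑ i, pm (x i) * pm (y i)

/-- The cyclic interval of length `m` starting at `a` in `ZMod d`. -/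
def cycInterval (d : ℕ) (a : ZMod d) (m : ℕ) : Finset (ZMod d) :=
  (Finset.range m).image (fun t : ℕ => (a + (t : ZMod d)))

/-- The cyclic diameter of `S ⊆ ZMod d`. -/
noncomputable def cycDiam (d : ℕ) (S : Finset (ZMod d)) : ℕ :=
  sInf {m : ℕ | ∃ a : ZMod d, S ⊆ cycInterval d a m}

/-- The `k`-th cyclic patch of length `q` of `x ∈ {-1,1}^d`. -/
def patch (d q : ℕ) (x : ZMod d → Bool) (k : ZMod d) : Fin q → Bool :=
  fun i => x (k + (i : ℕ))

section Aux

variable {d : ℕ} [NeZero d]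

lemma mem_cycInterval {a b : ZMod d} {m : ℕ} :
    b ∈ cycInterval d a m ↔ (b - a).val < m := by
  simp only [cycInterval, Finset.mem_image, Finset.mem_range]
  constructor
  · rintro ⟨t, ht, rfl⟩
    have h1 : a + (t : ZMod d) - a = (t : ZMod d) := by ring
    rw [h1, ZMod.val_natCast]
    exact lt_of_le_of_lt (Nat.mod_le _ _) ht
  · intro hlt
    refine ⟨(b - a).val, hlt, ?_⟩
    rw [ZMod.natCast_val, ZMod.cast_id]
    ring

lemma subset_cycInterval_iff {a : ZMod d} {m : ℕ} {S : Finset (ZMod d)} :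
    S ⊆ cycInterval d a m ↔ ∀ s ∈ S, (s - a).val < m := by
  simp [Finset.subset_iff, mem_cycInterval]

lemma cycDiam_witness (S : Finset (ZMod d)) :
    ∃ a : ZMod d, S ⊆ cycInterval d a (cycDiam d S) := by
  have hne : {m : ℕ | ∃ a : ZMod d, S ⊆ cycInterval d a m}.Nonempty :=
    ⟨d, 0, fun s _ => mem_cycInterval.mpr (ZMod.val_lt _)⟩
  exact Nat.sInf_mem hne

lemma cycDiam_le {S : Finset (ZMod d)} {m : ℕ} (a : ZMod d)
    (hs : S ⊆ cycInterval d a m) : cycDiam d S ≤ m :=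
  Nat.sInf_le ⟨a, hs⟩

lemma sub_one_val {z : ZMod d} (hz : z ≠ 0) : (z - 1).val = z.val - 1 := by
  have h1 : 1 ≤ z.val := Nat.one_le_iff_ne_zero.mpr
    (fun h => hz ((ZMod.val_eq_zero z).mp h))
  have h2 : z - 1 = ((z.val - 1 : ℕ) : ZMod d) := by
    rw [Nat.cast_sub h1, Nat.cast_one, ZMod.natCast_val, ZMod.cast_id]
  rw [h2, ZMod.val_natCast,
    Nat.mod_eq_of_lt (lt_of_le_of_lt (Nat.sub_le _ _) (ZMod.val_lt z))]

/-- The number of cyclic windows of length `q` covering a nonempty set `T`. -/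
lemma count_covers (q : ℕ) (hq : 1 ≤ q) (hdq : 2 * q ≤ d)
    (T : Finset (ZMod d)) (hT : T.Nonempty) :
    (Finset.univ.filter (fun k : ZMod d => T ⊆ cycInterval d k q)).card
      = if cycDiam d T ≤ q then q + 1 - cycDiam d T else 0 := by
  set γ := cycDiam d T with hγdef
  by_cases hγq : γ ≤ q
  · rw [if_pos hγq]
    obtain ⟨a₀, ha₀⟩ := cycDiam_witness T
    have hqd : q < d := by omega
    have hγ1 : 1 ≤ γ := by
      by_contra hc
      obtain ⟨s, hs⟩ := hT
      have := subset_cycInterval_iff.mp ha₀ s hs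
      omega
    have ha₀T : a₀ ∈ T := by
      by_contra hc
      have hsub : T ⊆ cycInterval d (a₀ + 1) (γ - 1) := by
        rw [subset_cycInterval_iff]
        intro s hs
        have h1 : (s - a₀).val < γ := subset_cycInterval_iff.mp ha₀ s hs
        have h2 : s - a₀ ≠ 0 := by
          intro h0
          exact hc (by rwa [sub_eq_zero.mp h0] at hs)
        have h3 : 1 ≤ (s - a₀).val := Nat.one_le_iff_ne_zero.mpr
          (fun h => h2 ((ZMod.val_eq_zero _).mp h))
        have h4 : s - (a₀ + 1) = (s - a₀) - 1 := by ring
        rw [h4, sub_one_val h2]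
        omega
      have := cycDiam_le (a₀ + 1) hsub
      omega
    have hhi : ∃ s ∈ T, (s - a₀).val = γ - 1 := by
      by_contra hc
      push_neg at hc
      have hsub : T ⊆ cycInterval d a₀ (γ - 1) := by
        rw [subset_cycInterval_iff]
        intro s hs
        have h1 : (s - a₀).val < γ := subset_cycInterval_iff.mp ha₀ s hs
        have := hc s hs
        omega
      have := cycDiam_le a₀ hsub
      omega
    obtain ⟨sh, hshT, hsh⟩ := hhi
    have hset : Finset.univ.filter (fun k : ZMod d => T ⊆ cycInterval d k q)
        = (Finset.range (q + 1 - γ)).image (fun j : ℕ => a₀ - (j : ZMod d)) := by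
      ext k
      simp only [Finset.mem_filter, Finset.mem_univ, true_and, Finset.mem_image,
        Finset.mem_range]
      constructor
      · intro hk
        have hu1 : (a₀ - k).val < q := subset_cycInterval_iff.mp hk a₀ ha₀T
        have hval : (sh - k).val < q := subset_cycInterval_iff.mp hk sh hshT
        have heq : sh - k = (sh - a₀) + (a₀ - k) := by ring
        have hvadd : (sh - k).val = ((γ - 1) + (a₀ - k).val) % d := by
          rw [heq, ZMod.val_add, hsh]
        have hlt : γ - 1 + (a₀ - k).val < d := by omega
        rw [hvadd, Nat.mod_eq_of_lt hlt] at hval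
        refine ⟨(a₀ - k).val, by omega, ?_⟩
        rw [ZMod.natCast_val, ZMod.cast_id]
        ring
      · rintro ⟨j, hj, rfl⟩
        rw [subset_cycInterval_iff]
        intro s hs
        have h1 : (s - a₀).val < γ := subset_cycInterval_iff.mp ha₀ s hs
        have heq : s - (a₀ - (j : ZMod d)) = (s - a₀) + (j : ZMod d) := by ring
        rw [heq, ZMod.val_add, ZMod.val_natCast, Nat.mod_eq_of_lt (by omega : j < d),
          Nat.mod_eq_of_lt (by omega)]
        omega
    rw [hset, Finset.card_image_of_injOn, Finset.card_range]
    intro i hi j hj hij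
    simp only [Finset.mem_coe, Finset.mem_range] at hi hj
    have h2 : (i : ZMod d) = (j : ZMod d) := by linear_combination -hij
    have h3 := congrArg ZMod.val h2
    rw [ZMod.val_natCast, ZMod.val_natCast, Nat.mod_eq_of_lt (by omega),
      Nat.mod_eq_of_lt (by omega)] at h3
    exact h3
  · rw [if_neg hγq, Finset.card_eq_zero, Finset.filter_eq_empty_iff]
    intro k _ hsub
    exact hγq (cycDiam_le k hsub)

lemma embk_inj {q : ℕ} (hqd : q ≤ d) (k : ZMod d) :
    Function.Injective (fun i : Fin q => k + ((i : ℕ) : ZMod d)) := by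
  intro i j hij
  have h2 : ((i : ℕ) : ZMod d) = ((j : ℕ) : ZMod d) := by
    have hij' : k + ((i : ℕ) : ZMod d) = k + ((j : ℕ) : ZMod d) := hij
    linear_combination hij'
  have h3 := congrArg ZMod.val h2
  rw [ZMod.val_natCast, ZMod.val_natCast, Nat.mod_eq_of_lt (lt_of_lt_of_le i.isLt hqd),
    Nat.mod_eq_of_lt (lt_of_lt_of_le j.isLt hqd)] at h3
  exact Fin.ext h3

lemma Y_image {q : ℕ} (hqd : q ≤ d) (k : ZMod d) (S : Finset (Fin q)) (x : ZMod d → Bool) :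
    Y (S.image (fun i : Fin q => k + ((i : ℕ) : ZMod d))) x = Y S (patch d q x k) := by
  unfold Y
  rw [Finset.prod_image (fun i _ j _ hij => embk_inj hqd k hij)]
  rfl

lemma sum_patch {q : ℕ} (hqd : q ≤ d) (k : ZMod d) (ℓ : ℕ) (g : Finset (ZMod d) → ℝ) :
    ∑ S ∈ Finset.powersetCard ℓ (Finset.univ : Finset (Fin q)),
      g (S.image (fun i : Fin q => k + ((i : ℕ) : ZMod d)))
    = ∑ T ∈ Finset.univ.filter
        (fun T : Finset (ZMod d) => T.card = ℓ ∧ T ⊆ cycInterval d k q), g T := by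
  set f : Fin q → ZMod d := fun i => k + ((i : ℕ) : ZMod d) with hf
  have hinj : Function.Injective f := embk_inj hqd k
  apply Finset.sum_bij
    (i := fun S (_ : S ∈ Finset.powersetCard ℓ (Finset.univ : Finset (Fin q))) => S.image f)
  · intro S hS
    simp only [Finset.mem_filter, Finset.mem_univ, true_and]
    refine ⟨?_, ?_⟩
    · rw [Finset.card_image_of_injective _ hinj]
      exact Finset.mem_powersetCard_univ.mp hS
    · intro t ht
      obtain ⟨i, _, rfl⟩ := Finset.mem_image.mp ht
      rw [mem_cycInterval]
      have h1 : f i - k = ((i : ℕ) : ZMod d) := by rw [hf]; ring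
      rw [h1, ZMod.val_natCast, Nat.mod_eq_of_lt (lt_of_lt_of_le i.isLt hqd)]
      exact i.isLt
  · intro S hS S' hS' hSS'
    exact Finset.image_injective hinj hSS'
  · intro T hT
    simp only [Finset.mem_filter, Finset.mem_univ, true_and] at hT
    have himg : (Finset.univ.filter (fun i : Fin q => f i ∈ T)).image f = T := by
      ext t
      simp only [Finset.mem_image, Finset.mem_filter, Finset.mem_univ, true_and]
      constructor
      · rintro ⟨i, hi, rfl⟩; exact hi
      · intro ht
        have h1 : (t - k).val < q := mem_cycInterval.mp (hT.2 ht)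
        have h2 : f ⟨(t - k).val, h1⟩ = t := by
          show k + (((t - k).val : ℕ) : ZMod d) = t
          rw [ZMod.natCast_val, ZMod.cast_id]
          ring
        exact ⟨⟨(t - k).val, h1⟩, by rw [h2]; exact ht, h2⟩
    refine ⟨Finset.univ.filter (fun i : Fin q => f i ∈ T), ?_, himg⟩
    rw [Finset.mem_powersetCard_univ, ← Finset.card_image_of_injective _ hinj, himg, hT.1]
  · intro S hS
    rfl

end Aux

/-- Eigendecomposition of the one-layer convolutional kernel: if `h` has
hypercubic Gegenbauer expansion with coefficients `ξ_{q,ℓ}`, then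
`H^{CK}(x,y) = (1/d) ∑_k h(⟨x_{(k)}, y_{(k)}⟩/q)` equals
`ξ_{q,0} + ∑_{ℓ=1}^q ∑_{S ∈ ℰ_ℓ} (r(S) ξ_{q,ℓ} / d) Y_S(x) Y_S(y)`, where
`ℰ_ℓ = {S ⊆ ℤ/dℤ : |S| = ℓ, γ(S) ≤ q}` and `r(S) = q + 1 - γ(S)`. -/
theorem conv_kernel_eigendecomposition (d q : ℕ) [NeZero d]
    (hq : 1 ≤ q) (hdq : 2 * q ≤ d) (h : ℝ → ℝ) (ξ : ℕ → ℝ)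
    (hexp : ∀ u v : Fin q → Bool, h (ip u v / q) =
      ∑ ℓ ∈ Finset.range (q + 1), ξ ℓ *
        ∑ S ∈ Finset.powersetCard ℓ (Finset.univ : Finset (Fin q)),
          Y S u * Y S v)
    (x y : ZMod d → Bool) :
    (1 / (d : ℝ)) * ∑ k : ZMod d, h (ip (patch d q x k) (patch d q y k) / q) =
      ξ 0 + ∑ ℓ ∈ Finset.Icc 1 q,
        ∑ S ∈ Finset.univ.filter
            (fun S : Finset (ZMod d) => S.card = ℓ ∧ cycDiam d S ≤ q),
          ((q + 1 - cycDiam d S : ℕ) : ℝ) * ξ ℓ / d * (Y S x * Y S y) := by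
  have hqd : q ≤ d := by omega
  have hdR : (d : ℝ) ≠ 0 := Nat.cast_ne_zero.mpr (NeZero.ne d)
  -- Step A: rewrite each summand via the Gegenbauer expansion and reindexing
  have hA : ∀ k : ZMod d, h (ip (patch d q x k) (patch d q y k) / q)
      = ξ 0 + ∑ ℓ ∈ Finset.Icc 1 q, ξ ℓ *
          ∑ T ∈ Finset.univ.filter
            (fun T : Finset (ZMod d) => T.card = ℓ ∧ T ⊆ cycInterval d k q),
            (Y T x * Y T y) := by
    intro k
    rw [hexp]
    have hterm : ∀ ℓ, ∑ S ∈ Finset.powersetCard ℓ (Finset.univ : Finset (Fin q)),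
        Y S (patch d q x k) * Y S (patch d q y k)
        = ∑ T ∈ Finset.univ.filter
            (fun T : Finset (ZMod d) => T.card = ℓ ∧ T ⊆ cycInterval d k q),
            (Y T x * Y T y) := by
      intro ℓ
      rw [← sum_patch hqd k ℓ (fun T => Y T x * Y T y)]
      exact Finset.sum_congr rfl fun S _ => by rw [Y_image hqd, Y_image hqd]
    have hins : Finset.range (q + 1) = insert 0 (Finset.Icc 1 q) := by
      ext n
      simp only [Finset.mem_range, Finset.mem_insert, Finset.mem_Icc]
      omega
    rw [Finset.sum_congr rfl (fun ℓ _ => by rw [hterm ℓ]), hins,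
      Finset.sum_insert (by simp)]
    congr 1
    have h0 : Finset.univ.filter
        (fun T : Finset (ZMod d) => T.card = 0 ∧ T ⊆ cycInterval d k q)
        = {(∅ : Finset (ZMod d))} := by
      ext T
      simp only [Finset.mem_filter, Finset.mem_univ, true_and, Finset.card_eq_zero,
        Finset.mem_singleton]
      exact ⟨fun hh => hh.1, fun hh => ⟨hh, hh ▸ Finset.empty_subset _⟩⟩
    rw [h0, Finset.sum_singleton]
    simp [Y]
  rw [Finset.sum_congr rfl (fun k _ => hA k), Finset.sum_add_distrib,
    Finset.sum_const, Finset.card_univ, ZMod.card, mul_add]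
  congr 1
  · rw [nsmul_eq_mul]
    field_simp
  -- Step C: the counting argument
  rw [Finset.sum_comm]
  have hC : ∀ ℓ ∈ Finset.Icc 1 q,
      ∑ k : ZMod d, ξ ℓ * ∑ T ∈ Finset.univ.filter
          (fun T : Finset (ZMod d) => T.card = ℓ ∧ T ⊆ cycInterval d k q),
          (Y T x * Y T y)
      = ξ ℓ * ∑ T ∈ Finset.univ.filter
          (fun T : Finset (ZMod d) => T.card = ℓ ∧ cycDiam d T ≤ q),
          ((q + 1 - cycDiam d T : ℕ) : ℝ) * (Y T x * Y T y) := by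
    intro ℓ hℓ
    have hℓ1 : 1 ≤ ℓ := (Finset.mem_Icc.mp hℓ).1
    rw [← Finset.mul_sum]
    congr 1
    calc ∑ k : ZMod d, ∑ T ∈ Finset.univ.filter
            (fun T : Finset (ZMod d) => T.card = ℓ ∧ T ⊆ cycInterval d k q),
            (Y T x * Y T y)
        = ∑ k : ZMod d, ∑ T ∈ Finset.univ.filter
            (fun T : Finset (ZMod d) => T.card = ℓ),
            (if T ⊆ cycInterval d k q then Y T x * Y T y else 0) := by
          refine Finset.sum_congr rfl fun k _ => ?_
          rw [← Finset.sum_filter, Finset.filter_filter]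
      _ = ∑ T ∈ Finset.univ.filter (fun T : Finset (ZMod d) => T.card = ℓ),
            ∑ k : ZMod d,
            (if T ⊆ cycInterval d k q then Y T x * Y T y else 0) := Finset.sum_comm
      _ = ∑ T ∈ Finset.univ.filter (fun T : Finset (ZMod d) => T.card = ℓ),
            (if cycDiam d T ≤ q then
              ((q + 1 - cycDiam d T : ℕ) : ℝ) * (Y T x * Y T y) else 0) := by
          refine Finset.sum_congr rfl fun T hT => ?_
          have hTcard : T.card = ℓ := (Finset.mem_filter.mp hT).2
          have hTne : T.Nonempty := Finset.card_pos.mp (by omega)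
          rw [← Finset.sum_filter, Finset.sum_const, count_covers q hq hdq T hTne]
          split_ifs with hcase
          · rw [nsmul_eq_mul]
          · simp
      _ = ∑ T ∈ Finset.univ.filter
            (fun T : Finset (ZMod d) => T.card = ℓ ∧ cycDiam d T ≤ q),
            ((q + 1 - cycDiam d T : ℕ) : ℝ) * (Y T x * Y T y) := by
          rw [← Finset.sum_filter, Finset.filter_filter]
  rw [Finset.sum_congr rfl hC, Finset.mul_sum]
  refine Finset.sum_congr rfl fun ℓ _ => ?_
  rw [Finset.mul_sum, Finset.mul_sum]
  refine Finset.sum_congr rfl fun T _ => ?_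
  ring
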